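/- arXiv:1102.1927 — 4 statements merged into one kernel-verified Lean document; each statement's English description precedes it below -/
import Mathlib

section
/- Fix an integer n ≥ 1 and an even integer λ ≥ 2 with λ − n − 1 ≥ 0, and set m = 1 + λ/2. Fix ρ > 0, b₀ > 0, σ > 0 and δ > 0 with δ < b₀/(2(m+1)), and suppose k := σ/2 + ln(2/3)/(24ρδ) ≥ 0. Then the MN function (9), namely MN(c) = √(8ρ) c^{(λ−n−1)/4} e^{kc} for 0 < c ≤ c₁ := 12ρb₀ and MN(c) = √(2/(3b₀)) c^{(1+λ−n)/4} e^{cσ/2} (2/3)^{b₀/(2δ)} for c ≥ c₁, is monotone nondecreasing on (0, ∞); in particular, with c₀ := 24ρ(m+1)δ one has MN(c₀) ≤ MN(c) for all c ∈ [c₀, ∞), so the optimal shape parameter in [c₀,∞) is c = c₀. -/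
open Real

lemma MN_aux (a k : ℝ) (ha : 0 ≤ a) (hk : 0 ≤ k) {x y : ℝ} (hx : 0 ≤ x) (hxy : x ≤ y) :
    x ^ a * Real.exp (k * x) ≤ y ^ a * Real.exp (k * y) :=
  mul_le_mul (Real.rpow_le_rpow hx hxy ha)
    (Real.exp_le_exp.2 (by nlinarith)) (Real.exp_pos _).le
    (Real.rpow_nonneg (hx.trans hxy) a)

/-- Case 1 of Section 3.1.1: for `λ − n − 1 ≥ 0` and `k ≥ 0`, the MN function (9)
is monotone nondecreasing on `(0,∞)`, so the optimal shape parameter in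
`[c₀,∞)` is `c = c₀ = 24ρ(m+1)δ`. -/
theorem MN_case1_Bsigma (n lam : ℕ) (hn : 1 ≤ n) (hlam : 2 ≤ lam) (hlame : Even lam)
    (hln : (n : ℝ) + 1 ≤ (lam : ℝ)) (m : ℕ) (hm : m = 1 + lam / 2)
    (ρ b₀ σ δ : ℝ) (hρ : 0 < ρ) (hb₀ : 0 < b₀) (hσ : 0 < σ) (hδ : 0 < δ)
    (hδb : δ < b₀ / (2 * ((m : ℝ) + 1)))
    (k : ℝ) (hk : k = σ / 2 + Real.log (2 / 3) / (24 * ρ * δ)) (hk0 : 0 ≤ k)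
    (c₀ c₁ : ℝ) (hc₀ : c₀ = 24 * ρ * ((m : ℝ) + 1) * δ) (hc₁ : c₁ = 12 * ρ * b₀)
    (MN : ℝ → ℝ)
    (hMN1 : ∀ c : ℝ, 0 < c → c ≤ c₁ →
      MN c = Real.sqrt (8 * ρ) * c ^ (((lam : ℝ) - n - 1) / 4) * exp (k * c))
    (hMN2 : ∀ c : ℝ, c₁ ≤ c →
      MN c = Real.sqrt (2 / (3 * b₀)) * c ^ ((1 + (lam : ℝ) - n) / 4) * exp (c * σ / 2) *
        ((2 : ℝ) / 3) ^ (b₀ / (2 * δ))) :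
    MonotoneOn MN (Set.Ioi (0 : ℝ)) ∧ ∀ c ∈ Set.Ici c₀, MN c₀ ≤ MN c := by
  have hc₁0 : 0 < c₁ := by rw [hc₁]; positivity
  have ha : 0 ≤ ((lam : ℝ) - n - 1) / 4 := by linarith
  have hb : 0 ≤ (1 + (lam : ℝ) - n) / 4 := by linarith
  -- branch 1 monotone
  have h1 : ∀ x y : ℝ, 0 < x → x ≤ y → y ≤ c₁ → MN x ≤ MN y := by
    intro x y hx hxy hyc
    rw [hMN1 x hx (hxy.trans hyc), hMN1 y (hx.trans_le hxy) hyc]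
    have := MN_aux (((lam : ℝ) - n - 1) / 4) k ha hk0 hx.le hxy
    have hs : (0:ℝ) ≤ Real.sqrt (8 * ρ) := Real.sqrt_nonneg _
    calc Real.sqrt (8 * ρ) * x ^ (((lam : ℝ) - n - 1) / 4) * exp (k * x)
        = Real.sqrt (8 * ρ) * (x ^ (((lam : ℝ) - n - 1) / 4) * exp (k * x)) := by ring
      _ ≤ Real.sqrt (8 * ρ) * (y ^ (((lam : ℝ) - n - 1) / 4) * exp (k * y)) :=
          mul_le_mul_of_nonneg_left this hs
      _ = Real.sqrt (8 * ρ) * y ^ (((lam : ℝ) - n - 1) / 4) * exp (k * y) := by ring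
  -- branch 2 monotone
  have h2 : ∀ x y : ℝ, c₁ ≤ x → x ≤ y → MN x ≤ MN y := by
    intro x y hxc hxy
    rw [hMN2 x hxc, hMN2 y (hxc.trans hxy)]
    have hx0 : 0 ≤ x := hc₁0.le.trans hxc
    have hex : exp (x * σ / 2) = exp ((σ/2) * x) := by ring_nf
    have hey : exp (y * σ / 2) = exp ((σ/2) * y) := by ring_nf
    have := MN_aux ((1 + (lam : ℝ) - n) / 4) (σ/2) hb (by linarith) hx0 hxy
    have hs : (0:ℝ) ≤ Real.sqrt (2 / (3 * b₀)) := Real.sqrt_nonneg _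
    have hB : (0:ℝ) ≤ ((2 : ℝ) / 3) ^ (b₀ / (2 * δ)) :=
      Real.rpow_nonneg (by norm_num) _
    calc Real.sqrt (2 / (3 * b₀)) * x ^ ((1 + (lam : ℝ) - n) / 4) * exp (x * σ / 2) *
          ((2 : ℝ) / 3) ^ (b₀ / (2 * δ))
        = Real.sqrt (2 / (3 * b₀)) * ((2 : ℝ) / 3) ^ (b₀ / (2 * δ)) *
            (x ^ ((1 + (lam : ℝ) - n) / 4) * exp ((σ/2) * x)) := by rw [← hex]; ring
      _ ≤ Real.sqrt (2 / (3 * b₀)) * ((2 : ℝ) / 3) ^ (b₀ / (2 * δ)) *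
            (y ^ ((1 + (lam : ℝ) - n) / 4) * exp ((σ/2) * y)) :=
          mul_le_mul_of_nonneg_left this (mul_nonneg hs hB)
      _ = Real.sqrt (2 / (3 * b₀)) * y ^ ((1 + (lam : ℝ) - n) / 4) * exp (y * σ / 2) *
            ((2 : ℝ) / 3) ^ (b₀ / (2 * δ)) := by rw [hey]; ring
  have hmono : MonotoneOn MN (Set.Ioi (0 : ℝ)) := by
    intro x hx y hy hxy
    simp only [Set.mem_Ioi] at hx hy
    rcases le_or_gt y c₁ with hyc | hyc
    · exact h1 x y hx hxy hyc
    · rcases le_or_gt c₁ x with hxc | hxc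
      · exact h2 x y hxc hxy
      · exact (h1 x c₁ hx hxc.le le_rfl).trans (h2 c₁ y le_rfl hyc.le)
  refine ⟨hmono, fun c hc => ?_⟩
  have hc₀0 : 0 < c₀ := by rw [hc₀]; positivity
  exact hmono (Set.mem_Ioi.2 hc₀0) (Set.mem_Ioi.2 (hc₀0.trans_le hc)) hc
end

section
/- Fix an integer n ≥ 1 and an even integer λ ≥ 2 with λ − n − 1 ≥ 0, set m = 1 + λ/2, and fix ρ > 0, b₀ > 0, σ > 0 and δ > 0 with δ < b₀/(2(m+1)); suppose k := σ/2 + ln(2/3)/(24ρδ) < 0. Let MN be the function (9): MN(c) = √(8ρ) c^{(λ−n−1)/4} e^{kc} for 0 < c ≤ c₁ := 12ρb₀ and MN(c) = √(2/(3b₀)) c^{(1+λ−n)/4} e^{cσ/2} (2/3)^{b₀/(2δ)} for c ≥ c₁. Then MN is strictly increasing on [c₁, ∞), and there exists c* ∈ [c₀, c₁], where c₀ := 24ρ(m+1)δ, such that MN(c*) ≤ MN(c) for all c ∈ [c₀, ∞). -/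
open Real

/-- Case 2 of Section 3.1.1: for `λ − n − 1 ≥ 0` and `k < 0`, the MN function (9)
is strictly increasing on `[c₁, ∞)`, and there exists `c* ∈ [c₀, c₁]` minimizing
`MN` over `[c₀, ∞)`. -/
theorem MN_case2_Bsigma (n lam : ℕ) (hn : 1 ≤ n) (hlam : 2 ≤ lam) (hlame : Even lam)
    (hln : (n : ℝ) + 1 ≤ (lam : ℝ)) (m : ℕ) (hm : m = 1 + lam / 2)
    (ρ b₀ σ δ : ℝ) (hρ : 0 < ρ) (hb₀ : 0 < b₀) (hσ : 0 < σ) (hδ : 0 < δ)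
    (hδb : δ < b₀ / (2 * ((m : ℝ) + 1)))
    (k : ℝ) (hk : k = σ / 2 + Real.log (2 / 3) / (24 * ρ * δ)) (hk0 : k < 0)
    (c₀ c₁ : ℝ) (hc₀ : c₀ = 24 * ρ * ((m : ℝ) + 1) * δ) (hc₁ : c₁ = 12 * ρ * b₀)
    (MN : ℝ → ℝ)
    (hMN1 : ∀ c : ℝ, 0 < c → c ≤ c₁ →
      MN c = Real.sqrt (8 * ρ) * c ^ (((lam : ℝ) - n - 1) / 4) * exp (k * c))
    (hMN2 : ∀ c : ℝ, c₁ ≤ c →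
      MN c = Real.sqrt (2 / (3 * b₀)) * c ^ ((1 + (lam : ℝ) - n) / 4) * exp (c * σ / 2) *
        ((2 : ℝ) / 3) ^ (b₀ / (2 * δ))) :
    StrictMonoOn MN (Set.Ici c₁) ∧
    ∃ cstar ∈ Set.Icc c₀ c₁, ∀ c ∈ Set.Ici c₀, MN cstar ≤ MN c := by
  have hm1 : (0:ℝ) < (m:ℝ) + 1 := by positivity
  have hc₀pos : 0 < c₀ := by rw [hc₀]; positivity
  have hc₁pos : 0 < c₁ := by rw [hc₁]; positivity
  have h2mb : 2 * ((m:ℝ)+1) * δ < b₀ := by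
    have := (lt_div_iff₀ (by positivity : (0:ℝ) < 2*((m:ℝ)+1))).mp hδb
    nlinarith
  have hc₀₁ : c₀ < c₁ := by
    rw [hc₀, hc₁]; nlinarith
  have hp : 0 < (1 + (lam:ℝ) - n)/4 := by linarith
  have hmono : StrictMonoOn MN (Set.Ici c₁) := by
    intro x hx y hy hxy
    simp only [Set.mem_Ici] at hx hy
    rw [hMN2 x hx, hMN2 y hy]
    have hx0 : 0 < x := lt_of_lt_of_le hc₁pos hx
    have hy0 : 0 < y := hx0.trans hxy
    have h1 : x ^ ((1 + (lam:ℝ) - n)/4) < y ^ ((1 + (lam:ℝ) - n)/4) :=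
      Real.rpow_lt_rpow hx0.le hxy hp
    have h2 : exp (x*σ/2) < exp (y*σ/2) := by
      apply Real.exp_lt_exp.mpr; nlinarith
    have hA : 0 < Real.sqrt (2/(3*b₀)) := Real.sqrt_pos.mpr (by positivity)
    have hB : 0 < ((2:ℝ)/3) ^ (b₀/(2*δ)) := Real.rpow_pos_of_pos (by norm_num) _
    have key : x ^ ((1 + (lam:ℝ) - n)/4) * exp (x*σ/2)
        < y ^ ((1 + (lam:ℝ) - n)/4) * exp (y*σ/2) :=
      mul_lt_mul'' h1 h2 (Real.rpow_pos_of_pos hx0 _).le (Real.exp_pos _).le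
    calc Real.sqrt (2/(3*b₀)) * x ^ ((1 + (lam:ℝ) - n)/4) * exp (x*σ/2) * ((2:ℝ)/3) ^ (b₀/(2*δ))
        = (Real.sqrt (2/(3*b₀)) * ((2:ℝ)/3) ^ (b₀/(2*δ))) * (x ^ ((1 + (lam:ℝ) - n)/4) * exp (x*σ/2)) := by ring
      _ < (Real.sqrt (2/(3*b₀)) * ((2:ℝ)/3) ^ (b₀/(2*δ))) * (y ^ ((1 + (lam:ℝ) - n)/4) * exp (y*σ/2)) :=
          mul_lt_mul_of_pos_left key (mul_pos hA hB)
      _ = Real.sqrt (2/(3*b₀)) * y ^ ((1 + (lam:ℝ) - n)/4) * exp (y*σ/2) * ((2:ℝ)/3) ^ (b₀/(2*δ)) := by ring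
  refine ⟨hmono, ?_⟩
  have hcont : ContinuousOn MN (Set.Icc c₀ c₁) := by
    have h1 : ContinuousOn (fun c : ℝ =>
        Real.sqrt (8 * ρ) * c ^ (((lam : ℝ) - n - 1) / 4) * exp (k * c)) (Set.Icc c₀ c₁) := by
      apply ContinuousOn.mul
      · apply ContinuousOn.mul continuousOn_const
        exact ContinuousOn.rpow_const continuousOn_id
          (fun x hx => Or.inl (ne_of_gt (lt_of_lt_of_le hc₀pos hx.1)))
      · exact (Real.continuous_exp.comp (continuous_const.mul continuous_id)).continuousOn
    exact h1.congr (fun c hc => hMN1 c (lt_of_lt_of_le hc₀pos hc.1) hc.2)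
  obtain ⟨cstar, hcs, hmin⟩ := isCompact_Icc.exists_isMinOn
    ⟨c₀, le_refl c₀, hc₀₁.le⟩ hcont
  refine ⟨cstar, hcs, fun c hc => ?_⟩
  simp only [Set.mem_Ici] at hc
  rcases le_or_gt c c₁ with h | h
  · exact hmin ⟨hc, h⟩
  · have h1 : MN cstar ≤ MN c₁ := hmin ⟨hc₀₁.le, le_refl c₁⟩
    have h2 : MN c₁ ≤ MN c := hmono.monotoneOn (le_refl c₁)
      (Set.mem_Ici.mpr h.le) h.le
    exact h1.trans h2
end

section
/- Fix an integer n ≥ 1 and an even integer λ ≥ 2 with λ − n − 1 < 0 and 1 + λ − n ≥ 0, set m = 1 + λ/2, and fix ρ > 0, b₀ > 0, σ > 0 and δ > 0 with δ < b₀/(2(m+1)); suppose k := σ/2 + ln(2/3)/(24ρδ) < 0. Let MN be the function (9): MN(c) = √(8ρ) c^{(λ−n−1)/4} e^{kc} for 0 < c ≤ c₁ := 12ρb₀ and MN(c) = √(2/(3b₀)) c^{(1+λ−n)/4} e^{cσ/2} (2/3)^{b₀/(2δ)} for c ≥ c₁. Then MN is strictly decreasing on [c₀, c₁] (where c₀ :=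 24ρ(m+1)δ) and strictly increasing on [c₁, ∞); consequently MN(c₁) ≤ MN(c) for all c ∈ [c₀, ∞), i.e. the optimal shape parameter is c* = c₁ = 12ρb₀. -/
open Real

/-- Case 3 of Section 3.1.1 together with its Remark: for `λ − n − 1 < 0`,
`1 + λ − n ≥ 0` and `k < 0`, the MN function (9) is strictly decreasing on
`[c₀, c₁]` and strictly increasing on `[c₁, ∞)`, so the optimal shape parameter
is `c* = c₁ = 12ρb₀`. -/
theorem MN_case3_Bsigma (n lam : ℕ) (hn : 1 ≤ n) (hlam : 2 ≤ lam) (hlame : Even lam)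
    (hln1 : (lam : ℝ) - n - 1 < 0) (hln2 : (0 : ℝ) ≤ 1 + (lam : ℝ) - n)
    (m : ℕ) (hm : m = 1 + lam / 2)
    (ρ b₀ σ δ : ℝ) (hρ : 0 < ρ) (hb₀ : 0 < b₀) (hσ : 0 < σ) (hδ : 0 < δ)
    (hδb : δ < b₀ / (2 * ((m : ℝ) + 1)))
    (k : ℝ) (hk : k = σ / 2 + Real.log (2 / 3) / (24 * ρ * δ)) (hk0 : k < 0)
    (c₀ c₁ : ℝ) (hc₀ : c₀ = 24 * ρ * ((m : ℝ) + 1) * δ) (hc₁ : c₁ = 12 * ρ * b₀)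
    (MN : ℝ → ℝ)
    (hMN1 : ∀ c : ℝ, 0 < c → c ≤ c₁ →
      MN c = Real.sqrt (8 * ρ) * c ^ (((lam : ℝ) - n - 1) / 4) * exp (k * c))
    (hMN2 : ∀ c : ℝ, c₁ ≤ c →
      MN c = Real.sqrt (2 / (3 * b₀)) * c ^ ((1 + (lam : ℝ) - n) / 4) * exp (c * σ / 2) *
        ((2 : ℝ) / 3) ^ (b₀ / (2 * δ))) :
    StrictAntiOn MN (Set.Icc c₀ c₁) ∧ StrictMonoOn MN (Set.Ici c₁) ∧
    ∀ c ∈ Set.Ici c₀, MN c₁ ≤ MN c := by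

  have hc₀pos : 0 < c₀ := by
    rw [hc₀]; positivity
  have hc₀₁ : c₀ < c₁ := by
    have : δ * (2 * ((m:ℝ) + 1)) < b₀ := by
      rw [lt_div_iff₀ (by positivity)] at hδb; linarith
    rw [hc₀, hc₁]; nlinarith
  have hc₁pos : 0 < c₁ := lt_trans hc₀pos hc₀₁
  have ha : ((lam : ℝ) - n - 1) / 4 < 0 := by linarith
  have hbnn : 0 ≤ (1 + (lam : ℝ) - n) / 4 := by linarith
  have hanti : StrictAntiOn MN (Set.Icc c₀ c₁) := by
    intro x hx y hy hxy
    have hxpos : 0 < x := lt_of_lt_of_le hc₀pos hx.1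
    have hypos : 0 < y := lt_of_lt_of_le hc₀pos hy.1
    rw [hMN1 x hxpos hx.2, hMN1 y hypos hy.2]
    have h1 : y ^ (((lam : ℝ) - n - 1) / 4) < x ^ (((lam : ℝ) - n - 1) / 4) :=
      Real.rpow_lt_rpow_of_neg hxpos hxy ha
    have h2 : Real.exp (k * y) < Real.exp (k * x) := by
      apply Real.exp_lt_exp.2; nlinarith
    have hs : 0 < Real.sqrt (8 * ρ) := Real.sqrt_pos.2 (by positivity)
    have hAB : Real.sqrt (8 * ρ) * y ^ (((lam : ℝ) - n - 1) / 4)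
        < Real.sqrt (8 * ρ) * x ^ (((lam : ℝ) - n - 1) / 4) :=
      mul_lt_mul_of_pos_left h1 hs
    exact mul_lt_mul'' hAB h2
      (mul_nonneg hs.le (Real.rpow_nonneg hypos.le _)) (Real.exp_pos _).le
  have hmono : StrictMonoOn MN (Set.Ici c₁) := by
    intro x hx y hy hxy
    have hxpos : 0 < x := lt_of_lt_of_le hc₁pos hx
    have hypos : 0 < y := lt_of_lt_of_le hc₁pos hy
    rw [hMN2 x hx, hMN2 y hy]
    have h1 : x ^ ((1 + (lam : ℝ) - n) / 4) ≤ y ^ ((1 + (lam : ℝ) - n) / 4) :=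
      Real.rpow_le_rpow hxpos.le hxy.le hbnn
    have h2 : Real.exp (x * σ / 2) < Real.exp (y * σ / 2) := by
      apply Real.exp_lt_exp.2; nlinarith
    have hs : 0 < Real.sqrt (2 / (3 * b₀)) := Real.sqrt_pos.2 (by positivity)
    have h3 : Real.sqrt (2 / (3 * b₀)) * x ^ ((1 + (lam : ℝ) - n) / 4) * Real.exp (x * σ / 2)
        < Real.sqrt (2 / (3 * b₀)) * y ^ ((1 + (lam : ℝ) - n) / 4) * Real.exp (y * σ / 2) :=
      mul_lt_mul' (mul_le_mul_of_nonneg_left h1 hs.le) h2 (Real.exp_pos _).le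
        (mul_pos hs (Real.rpow_pos_of_pos hypos _))
    exact mul_lt_mul_of_pos_right h3 (Real.rpow_pos_of_pos (by norm_num) _)
  refine ⟨hanti, hmono, fun c hc => ?_⟩
  rcases lt_trichotomy c c₁ with h | h | h
  · exact (hanti ⟨hc, h.le⟩ ⟨hc₀₁.le, le_rfl⟩ h).le
  · rw [h]
  · exact (hmono (Set.mem_Ici.2 le_rfl) (Set.mem_Ici.2 h.le) h).le
end

section
/- Fix an integer n ≥ 1 and an even integer λ ≥ 2 with 1 + λ − n ≥ 0, set m = 1 + λ/2, and fix ρ > 0, b₀ > 0, σ > 0 and δ > 0 with δ < b₀/(2(m+1)). Let MN_E be the function (10): MN_E(c) = √(8ρ) c^{(λ−n−1)/4} S(c) (2/3)^{c/(24ρδ)} for 0 < c ≤ c₁ := 12ρb₀ and MN_E(c) = √(2/(3b₀)) c^{(1+λ−n)/4} S(c) (2/3)^{b₀/(2δ)} for c ≥ c₁, where S(c) := sup_{ξ ∈ ℝⁿ} |ξ|^{(1+n+λ)/4} exp(c|ξ|/2 − |ξ|²/(2σ)). Then MN_E is nondecreasing on [c₁, ∞), and there exists c* ∈ [c₀, c₁],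 where c₀ := 24ρ(m+1)δ, such that MN_E(c*) ≤ MN_E(c) for all c ∈ [c₀, ∞). -/
/-!
`MN_E` is continuous on the compact interval `[c₀, c₁]`, so it attains a minimum there. On
`[c₁, ∞)` it is a product of nonnegative nondecreasing factors: `c ^ ((1 + λ - n) / 4)` (this is
where `1 + λ - n ≥ 0` enters) and `S`, which is a supremum of the nondecreasing functions
`c ↦ |ξ|^p exp (c|ξ|/2 - |ξ|²/(2σ))`. Hence the minimum over `[c₀, c₁]` is also one over
`[c₀, ∞)`. Continuity of `S` comes from its convexity, as a supremum of convex functions of `c`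
that is finite because the Gaussian factor dominates.
-/

open Real Set

theorem monotone_ciSup_of_bddAbove {ι α : Type*} [Preorder α] {f : ι → α → ℝ}
    (hf : ∀ i, Monotone (f i)) (hbdd : ∀ x, BddAbove (range fun i => f i x)) :
    Monotone fun x => ⨆ i, f i x :=
  fun _ _ hxy => ciSup_mono (hbdd _) fun i => hf i hxy

theorem convexOn_ciSup_of_bddAbove {ι α : Type*} [Nonempty ι] [AddCommMonoid α] [Module ℝ α]
    {s : Set α} {f : ι → α → ℝ} (hs : Convex ℝ s) (hf : ∀ i, ConvexOn ℝ s (f i))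
    (hbdd : ∀ x ∈ s, BddAbove (range fun i => f i x)) : ConvexOn ℝ s fun x => ⨆ i, f i x :=
  ⟨hs, fun x hx y hy _ _ ha hb hab => ciSup_le fun i => ((hf i).2 hx hy ha hb hab).trans <|
    add_le_add (smul_le_smul_of_nonneg_left (le_ciSup (hbdd x hx) i) ha)
      (smul_le_smul_of_nonneg_left (le_ciSup (hbdd y hy) i) hb)⟩

theorem convexOn_mul_exp_mul_add {A : ℝ} (hA : 0 ≤ A) (B C : ℝ) :
    ConvexOn ℝ univ fun x => A * exp (B * x + C) := by
  simpa using
    (convexOn_exp.comp_affineMap (B • AffineMap.id ℝ ℝ + AffineMap.const ℝ ℝ C)).smul hA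

theorem exists_isMinOn_Ici_of_continuousOn_Icc_of_monotoneOn_Ici {α β : Type*}
    [ConditionallyCompleteLinearOrder α] [TopologicalSpace α] [OrderTopology α]
    [LinearOrder β] [TopologicalSpace β] [OrderClosedTopology β] {f : α → β} {a b : α}
    (hab : a ≤ b) (hf : ContinuousOn f (Icc a b)) (hmono : MonotoneOn f (Ici b)) :
    ∃ c ∈ Icc a b, IsMinOn f (Ici a) c := by
  obtain ⟨c, hc, hmin⟩ := isCompact_Icc.exists_isMinOn (nonempty_Icc.2 hab) hf
  refine ⟨c, hc, fun x (hx : a ≤ x) => ?_⟩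
  rcases le_total x b with hxb | hbx
  · exact hmin ⟨hx, hxb⟩
  · exact (hmin (right_mem_Icc.2 hab)).trans (hmono self_mem_Ici hbx hbx)

theorem rpow_mul_exp_le {r : ℝ} (hr : 0 ≤ r) {p : ℝ} (hp : 0 ≤ p) {σ : ℝ} (hσ : 0 < σ) (c : ℝ) :
    r ^ p * exp (c * r / 2 - r ^ 2 / (2 * σ)) ≤ exp (σ * (p + c / 2) ^ 2 / 2) := by
  have hpow : r ^ p ≤ exp (r * p) := by
    rw [exp_mul]
    exact rpow_le_rpow hr (by linarith [add_one_le_exp r]) hp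
  have hσr : r ^ 2 / (2 * σ) * (2 * σ) = r ^ 2 := div_mul_cancel₀ _ (by positivity)
  calc r ^ p * exp (c * r / 2 - r ^ 2 / (2 * σ))
      ≤ exp (r * p) * exp (c * r / 2 - r ^ 2 / (2 * σ)) := by gcongr
    _ = exp (r * p + (c * r / 2 - r ^ 2 / (2 * σ))) := (exp_add _ _).symm
    _ ≤ exp (σ * (p + c / 2) ^ 2 / 2) := by
      gcongr
      nlinarith [sq_nonneg (r - σ * (p + c / 2))]

section ExpWeightSup

variable (E : Type*) [NormedAddCommGroup E] (p σ : ℝ)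

/-- The function `S` of the paper, with exponent `p = (1 + n + λ) / 4` and `E = ℝⁿ`. -/
noncomputable def expWeightSup (c : ℝ) : ℝ :=
  ⨆ ξ : E, ‖ξ‖ ^ p * exp (c * ‖ξ‖ / 2 - ‖ξ‖ ^ 2 / (2 * σ))

variable {p σ}

theorem expWeightSup_nonneg (c : ℝ) : 0 ≤ expWeightSup E p σ c :=
  Real.iSup_nonneg fun _ => by positivity

theorem bddAbove_range_expWeight (hp : 0 ≤ p) (hσ : 0 < σ) (c : ℝ) :
    BddAbove (range fun ξ : E => ‖ξ‖ ^ p * exp (c * ‖ξ‖ / 2 - ‖ξ‖ ^ 2 / (2 * σ))) :=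
  ⟨_, forall_mem_range.2 fun ξ => rpow_mul_exp_le (norm_nonneg ξ) hp hσ c⟩

theorem monotone_expWeightSup (hp : 0 ≤ p) (hσ : 0 < σ) : Monotone (expWeightSup E p σ) :=
  monotone_ciSup_of_bddAbove (fun ξ _ _ h => by gcongr) (bddAbove_range_expWeight E hp hσ)

theorem convexOn_expWeightSup (hp : 0 ≤ p) (hσ : 0 < σ) :
    ConvexOn ℝ univ (expWeightSup E p σ) := by
  refine convexOn_ciSup_of_bddAbove convex_univ (fun ξ => ?_)
    fun c _ => bddAbove_range_expWeight E hp hσ c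
  exact (convexOn_mul_exp_mul_add (by positivity : 0 ≤ ‖ξ‖ ^ p) (‖ξ‖ / 2) (-(‖ξ‖ ^ 2 / (2 * σ)))).congr
    fun c _ => by ring_nf

theorem continuous_expWeightSup (hp : 0 ≤ p) (hσ : 0 < σ) : Continuous (expWeightSup E p σ) :=
  continuousOn_univ.1 ((convexOn_expWeightSup E hp hσ).continuousOn isOpen_univ)

end ExpWeightSup

theorem MN_case1_Esigma_general (n lam : ℕ)
    (hln : (0 : ℝ) ≤ 1 + (lam : ℝ) - n)
    (m : ℕ)
    (ρ b₀ σ δ : ℝ) (hρ : 0 < ρ) (hb₀ : 0 < b₀) (hσ : 0 < σ) (hδ : 0 < δ)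
    (hδb : δ < b₀ / (2 * ((m : ℝ) + 1)))
    (c₀ c₁ : ℝ) (hc₀ : c₀ = 24 * ρ * ((m : ℝ) + 1) * δ) (hc₁ : c₁ = 12 * ρ * b₀)
    (S : ℝ → ℝ)
    (hS : ∀ c : ℝ, S c = ⨆ ξ : EuclideanSpace ℝ (Fin n),
      ‖ξ‖ ^ ((1 + (n : ℝ) + (lam : ℝ)) / 4) * exp (c * ‖ξ‖ / 2 - ‖ξ‖ ^ 2 / (2 * σ)))
    (MN : ℝ → ℝ)
    (hMN1 : ∀ c : ℝ, 0 < c → c ≤ c₁ →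
      MN c = Real.sqrt (8 * ρ) * c ^ (((lam : ℝ) - n - 1) / 4) * S c *
        ((2 : ℝ) / 3) ^ (c / (24 * ρ * δ)))
    (hMN2 : ∀ c : ℝ, c₁ ≤ c →
      MN c = Real.sqrt (2 / (3 * b₀)) * c ^ ((1 + (lam : ℝ) - n) / 4) * S c *
        ((2 : ℝ) / 3) ^ (b₀ / (2 * δ))) :
    MonotoneOn MN (Set.Ici c₁) ∧
    ∃ cstar ∈ Set.Icc c₀ c₁, ∀ c ∈ Set.Ici c₀, MN cstar ≤ MN c := by
  have hp : (0 : ℝ) ≤ (1 + n + lam) / 4 := by positivity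
  obtain rfl : S = expWeightSup _ _ σ := funext hS
  have hc₀_pos : 0 < c₀ := by rw [hc₀]; positivity
  have hc₀₁ : c₀ ≤ c₁ := by
    rw [lt_div_iff₀ (by positivity)] at hδb
    nlinarith
  have hc₁_nonneg : 0 ≤ c₁ := by rw [hc₁]; positivity
  have hmono : MonotoneOn MN (Ici c₁) := fun a (ha : c₁ ≤ a) b (hb : c₁ ≤ b) hab => by
    rw [hMN2 a ha, hMN2 b hb]
    gcongr
    case c0 => exact expWeightSup_nonneg _ _
    case b0 => exact mul_nonneg (sqrt_nonneg _) (rpow_nonneg (hc₁_nonneg.trans hb) _)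
    case h₂ => exact monotone_expWeightSup _ hp hσ hab
    case h => exact hc₁_nonneg.trans ha
  have hcont : ContinuousOn MN (Icc c₀ c₁) := by
    refine ContinuousOn.congr ?_ fun c hc => hMN1 c (hc₀_pos.trans_le hc.1) hc.2
    have hgeom : Continuous fun c : ℝ => ((2 : ℝ) / 3) ^ (c / (24 * ρ * δ)) := by
      fun_prop (disch := norm_num)
    refine ((continuousOn_const.mul (continuousOn_id.rpow_const fun c hc => ?_)).mul
      (continuous_expWeightSup _ hp hσ).continuousOn).mul hgeom.continuousOn
    exact Or.inl (hc₀_pos.trans_le hc.1).ne'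
  obtain ⟨cstar, hcstar, hmin⟩ :=
    exists_isMinOn_Ici_of_continuousOn_Icc_of_monotoneOn_Ici hc₀₁ hcont hmono
  exact ⟨hmono, cstar, hcstar, isMinOn_iff.1 hmin⟩

/-- Case 1 of Section 3.1.2: for `1 + λ − n ≥ 0`, the MN function (10) for
functions of class `E_σ` is nondecreasing on `[c₁, ∞)`, and there exists
`c* ∈ [c₀, c₁]` minimizing it over `[c₀, ∞)`. -/
theorem MN_case1_Esigma (n lam : ℕ) (hn : 1 ≤ n) (hlam : 2 ≤ lam) (hlame : Even lam)
    (hln : (0 : ℝ) ≤ 1 + (lam : ℝ) - n)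
    (m : ℕ) (hm : m = 1 + lam / 2)
    (ρ b₀ σ δ : ℝ) (hρ : 0 < ρ) (hb₀ : 0 < b₀) (hσ : 0 < σ) (hδ : 0 < δ)
    (hδb : δ < b₀ / (2 * ((m : ℝ) + 1)))
    (c₀ c₁ : ℝ) (hc₀ : c₀ = 24 * ρ * ((m : ℝ) + 1) * δ) (hc₁ : c₁ = 12 * ρ * b₀)
    (S : ℝ → ℝ)
    (hS : ∀ c : ℝ, S c = ⨆ ξ : EuclideanSpace ℝ (Fin n),
      ‖ξ‖ ^ ((1 + (n : ℝ) + (lam : ℝ)) / 4) * exp (c * ‖ξ‖ / 2 - ‖ξ‖ ^ 2 / (2 * σ)))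
    (MN : ℝ → ℝ)
    (hMN1 : ∀ c : ℝ, 0 < c → c ≤ c₁ →
      MN c = Real.sqrt (8 * ρ) * c ^ (((lam : ℝ) - n - 1) / 4) * S c *
        ((2 : ℝ) / 3) ^ (c / (24 * ρ * δ)))
    (hMN2 : ∀ c : ℝ, c₁ ≤ c →
      MN c = Real.sqrt (2 / (3 * b₀)) * c ^ ((1 + (lam : ℝ) - n) / 4) * S c *
        ((2 : ℝ) / 3) ^ (b₀ / (2 * δ))) :
    MonotoneOn MN (Set.Ici c₁) ∧
    ∃ cstar ∈ Set.Icc c₀ c₁, ∀ c ∈ Set.Ici c₀, MN cstar ≤ MN c :=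
  MN_case1_Esigma_general n lam hln m ρ b₀ σ δ hρ hb₀ hσ hδ hδb c₀ c₁ hc₀ hc₁ S hS MN hMN1 hMN2
end
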